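/- arXiv:2502.05516 — 8 statements merged into one kernel-verified Lean document; each statement's English description precedes it below -/
import Mathlib

section
/- The Laplace mechanism releasing Y = f(x) + Lap(0, Δ₁(f)/ε) satisfies ε-differential privacy: for any two neighboring databases x₁ ∼ x₂ and any measurable E ⊆ ℝ, the density ratio of the output distributions is bounded by e^ε, i.e., P_{Y|X=x₁}(E) ≤ e^ε · P_{Y|X=x₂}(E). -/
/-!
By the triangle inequality, `|y - μ₂| - |y - μ₁| ≤ |μ₁ - μ₂| ≤ ε b`, so the Laplace density
centred at `μ₁` is pointwise at most `exp ε` times the one centred at `μ₂`; integrating this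
bound over `E` gives the claim, and sensitivity supplies `|f x₁ - f x₂| ≤ Δ = ε b`.
-/

open Real MeasureTheory Set

noncomputable def laplacePDFReal (μ b y : ℝ) : ℝ :=
  1 / (2 * b) * exp (-|y - μ| / b)

lemma integrable_exp_neg_mul_abs {a : ℝ} (ha : 0 < a) :
    Integrable fun y : ℝ ↦ exp (-a * |y|) := by
  have hIic : IntegrableOn (fun y : ℝ ↦ exp (-a * |y|)) (Iic 0) :=
    (integrableOn_exp_mul_Iic ha 0).congr_fun
      (fun y hy ↦ by rw [abs_of_nonpos hy, mul_neg, neg_mul, neg_neg]) measurableSet_Iic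
  have hIoi : IntegrableOn (fun y : ℝ ↦ exp (-a * |y|)) (Ioi 0) :=
    (exp_neg_integrableOn_Ioi 0 ha).congr_fun
      (fun y hy ↦ by rw [abs_of_pos hy]) measurableSet_Ioi
  simpa only [Iic_union_Ioi, integrableOn_univ] using hIic.union hIoi

lemma integrable_laplacePDFReal (μ : ℝ) {b : ℝ} (hb : 0 < b) :
    Integrable (laplacePDFReal μ b) := by
  refine (((integrable_exp_neg_mul_abs (inv_pos.2 hb)).comp_sub_right μ).const_mul
    (1 / (2 * b))).congr (.of_forall fun y ↦ ?_)
  simp only [laplacePDFReal, neg_mul, mul_neg, div_eq_inv_mul]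

lemma laplacePDFReal_le_exp_mul {μ₁ μ₂ b ε : ℝ} (hb : 0 < b) (hμ : |μ₁ - μ₂| ≤ ε * b)
    (y : ℝ) : laplacePDFReal μ₁ b y ≤ exp ε * laplacePDFReal μ₂ b y := by
  have hexponent : -|y - μ₁| / b ≤ ε + -|y - μ₂| / b := by
    rw [← sub_le_iff_le_add, ← sub_div, div_le_iff₀ hb]
    linarith [abs_sub_le y μ₁ μ₂]
  unfold laplacePDFReal
  rw [mul_left_comm, ← exp_add]
  gcongr

lemma setIntegral_laplacePDFReal_le_exp_mul {μ₁ μ₂ b ε : ℝ} (hb : 0 < b)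
    (hμ : |μ₁ - μ₂| ≤ ε * b) (E : Set ℝ) :
    ∫ y in E, laplacePDFReal μ₁ b y ≤ exp ε * ∫ y in E, laplacePDFReal μ₂ b y := by
  rw [← integral_const_mul]
  exact setIntegral_mono (integrable_laplacePDFReal μ₁ hb).integrableOn
    ((integrable_laplacePDFReal μ₂ hb).const_mul _).integrableOn
    (laplacePDFReal_le_exp_mul hb hμ)

theorem laplace_mechanism_dp_general {n : ℕ} {D : Type*}
    (f : (Fin n → D) → ℝ) (Δ ε : ℝ) (hε : 0 < ε) (hΔ : 0 < Δ)
    (hsens : ∀ x₁ x₂ : Fin n → D,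
      (∃ i, (∀ j, j ≠ i → x₁ j = x₂ j) ∧ x₁ i ≠ x₂ i) → |f x₁ - f x₂| ≤ Δ)
    (x₁ x₂ : Fin n → D)
    (hnbr : ∃ i, (∀ j, j ≠ i → x₁ j = x₂ j) ∧ x₁ i ≠ x₂ i)
    (E : Set ℝ) :
    ∫ y in E, (1 / (2 * (Δ / ε))) * Real.exp (-|y - f x₁| / (Δ / ε)) ≤
      Real.exp ε * ∫ y in E, (1 / (2 * (Δ / ε))) * Real.exp (-|y - f x₂| / (Δ / ε)) := by
  have hshift : |f x₁ - f x₂| ≤ ε * (Δ / ε) := by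
    rw [mul_div_cancel₀ Δ hε.ne']
    exact hsens x₁ x₂ hnbr
  exact setIntegral_laplacePDFReal_le_exp_mul (div_pos hΔ hε) hshift E

/-- The Laplace mechanism with scale `b = Δ/ε` satisfies `ε`-DP: for neighboring
databases `x₁ ∼ x₂` and every measurable `E ⊆ ℝ`,
`P_{Y|X=x₁}(E) ≤ e^ε · P_{Y|X=x₂}(E)`. -/
theorem laplace_mechanism_dp {n : ℕ} {D : Type*} [Fintype D]
    (f : (Fin n → D) → ℝ) (Δ ε : ℝ) (hε : 0 < ε) (hΔ : 0 < Δ)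
    (hsens : ∀ x₁ x₂ : Fin n → D,
      (∃ i, (∀ j, j ≠ i → x₁ j = x₂ j) ∧ x₁ i ≠ x₂ i) → |f x₁ - f x₂| ≤ Δ)
    (x₁ x₂ : Fin n → D)
    (hnbr : ∃ i, (∀ j, j ≠ i → x₁ j = x₂ j) ∧ x₁ i ≠ x₂ i)
    (E : Set ℝ) (hE : MeasurableSet E) :
    ∫ y in E, (1 / (2 * (Δ / ε))) * Real.exp (-|y - f x₁| / (Δ / ε)) ≤
      Real.exp ε * ∫ y in E, (1 / (2 * (Δ / ε))) * Real.exp (-|y - f x₂| / (Δ / ε)) :=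
  laplace_mechanism_dp_general f Δ ε hε hΔ hsens x₁ x₂ hnbr E
end

section
/- If a mechanism P_{Y|X} on 𝒳 = 𝒟ⁿ satisfies ε-differential privacy, then for every product distribution P_X = ∏ᵢ P_{D_i} with full support, every index i ∈ [n], and every output y with positive density, the pointwise maximal leakage of the i-th entry satisfies ℓ(D_i → y) ≤ ε. -/
open Finset Real

/-! Fix the output `y` and write `P(y | Dᵢ = d)` as a sum over the slice `{x | x i = d}`.
Moving a record from the slice at `d'` to the slice at `d` changes only the `i`-th entry, so
ε-DP gives `P(y | Dᵢ = d) ≤ e^ε P(y | Dᵢ = d')` for all `d, d'`. Since `P(y)` is the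
`pᵢ`-average of the `P(y | Dᵢ = d')`, every ratio `P(y | Dᵢ = d) / P(y)` lies in
`[e^{-ε}, e^ε]`; in particular the maximum is positive and its logarithm is at most `ε`. -/

section WeightedAverage

variable {α : Type*} [Fintype α] {w f : α → ℝ} {c : ℝ}

theorem le_mul_sum_weight_mul (hw : ∀ b, 0 ≤ w b) (hws : ∑ b, w b = 1)
    (hf : ∀ a b, f a ≤ c * f b) (a : α) : f a ≤ c * ∑ b, w b * f b :=
  calc f a = ∑ b, w b * f a := by rw [← Finset.sum_mul, hws, one_mul]
    _ ≤ ∑ b, w b * (c * f b) := by gcongr with b; exacts [hw b, hf a b]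
    _ = c * ∑ b, w b * f b := by
        rw [Finset.mul_sum]
        exact Finset.sum_congr rfl fun b _ => by ring

theorem sum_weight_mul_le_mul (hw : ∀ b, 0 ≤ w b) (hws : ∑ b, w b = 1)
    (hf : ∀ a b, f a ≤ c * f b) (a : α) : ∑ b, w b * f b ≤ c * f a :=
  calc ∑ b, w b * f b ≤ ∑ b, w b * (c * f a) := by gcongr with b; exacts [hw b, hf b a]
    _ = c * f a := by rw [← Finset.sum_mul, hws, one_mul]

end WeightedAverage

section Slice

variable {ι D : Type*} [Fintype ι] [DecidableEq ι] [Fintype D] [DecidableEq D]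

/-- With `f = Q(y | ·)` and the product prior `∏ⱼ pⱼ`, `sliceSum f p i d = P(y | Dᵢ = d)`. -/
def sliceSum (f : (ι → D) → ℝ) (p : ι → D → ℝ) (i : ι) (d : D) : ℝ :=
  ∑ x ∈ univ.filter (fun x : ι → D => x i = d), f x * ∏ j ∈ univ.erase i, p j (x j)

theorem sum_mul_prod_eq_sum_mul_sliceSum (f : (ι → D) → ℝ) (p : ι → D → ℝ) (i : ι) :
    ∑ x : ι → D, f x * ∏ j, p j (x j) = ∑ d, p i d * sliceSum f p i d := by
  rw [← Finset.sum_fiberwise (g := fun x : ι → D => x i)]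
  refine Finset.sum_congr rfl fun d _ => ?_
  rw [sliceSum, Finset.mul_sum]
  refine Finset.sum_congr rfl fun x hx => ?_
  rw [(Finset.mem_filter.mp hx).2.symm, ← Finset.mul_prod_erase univ _ (mem_univ i)]
  ring

theorem sliceSum_eq_sliceSum_update (f : (ι → D) → ℝ) (p : ι → D → ℝ) (i : ι) (d d' : D) :
    sliceSum f p i d = sliceSum (fun x => f (Function.update x i d)) p i d' := by
  refine Finset.sum_nbij' (Function.update · i d') (Function.update · i d) ?_ ?_ ?_ ?_ ?_
    <;> intro x hx
  · simp
  · simp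
  all_goals
    beta_reduce
    rw [Function.update_idem, ← (Finset.mem_filter.mp hx).2, Function.update_eq_self]
  refine congrArg _ (Finset.prod_congr rfl fun j hj => ?_)
  rw [Function.update_of_ne (Finset.ne_of_mem_erase hj)]

theorem sliceSum_mono {f g : (ι → D) → ℝ} {p : ι → D → ℝ} (hp : ∀ j d, 0 ≤ p j d)
    (hfg : ∀ x, f x ≤ g x) (i : ι) (d : D) : sliceSum f p i d ≤ sliceSum g p i d :=
  Finset.sum_le_sum fun x _ =>
    mul_le_mul_of_nonneg_right (hfg x) (Finset.prod_nonneg fun j _ => hp j (x j))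

theorem sliceSum_const_mul (c : ℝ) (f : (ι → D) → ℝ) (p : ι → D → ℝ) (i : ι) (d : D) :
    sliceSum (fun x => c * f x) p i d = c * sliceSum f p i d := by
  simp only [sliceSum, Finset.mul_sum, mul_assoc]

theorem sliceSum_le_mul_sliceSum {f : (ι → D) → ℝ} {p : ι → D → ℝ} {c : ℝ}
    (hp : ∀ j d, 0 ≤ p j d) {i : ι}
    (hf : ∀ x x', (∀ j, j ≠ i → x j = x' j) → f x ≤ c * f x') (d d' : D) :
    sliceSum f p i d ≤ c * sliceSum f p i d' := by
  have hupdate : ∀ x, f (Function.update x i d) ≤ c * f (Function.update x i d') :=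
    fun x => hf _ _ fun j hj => by
      rw [Function.update_of_ne hj, Function.update_of_ne hj]
  calc sliceSum f p i d = sliceSum (fun x => f (Function.update x i d)) p i d' :=
        sliceSum_eq_sliceSum_update f p i d d'
    _ ≤ sliceSum (fun x => c * f (Function.update x i d')) p i d' :=
        sliceSum_mono hp hupdate i d'
    _ = c * sliceSum f p i d' := by
        rw [sliceSum_const_mul, ← sliceSum_eq_sliceSum_update]

end Slice

theorem dp_implies_pml_of_entry_general {n : ℕ} {D Y : Type*} [Fintype D] [Nonempty D]
    [DecidableEq D]
    (Q : (Fin n → D) → Y → ℝ)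
    (ε : ℝ)
    (hDP : ∀ x x' : Fin n → D, (∃ i, ∀ j, j ≠ i → x j = x' j) →
      ∀ y, Q x y ≤ Real.exp ε * Q x' y)
    (p : Fin n → D → ℝ) (hp : ∀ i d, 0 < p i d) (hps : ∀ i, ∑ d, p i d = 1)
    (i : Fin n) (y : Y)
    (PY : ℝ) (hPY : PY = ∑ x : Fin n → D, Q x y * ∏ j, p j (x j)) (hPYpos : 0 < PY)
    (Pcond : D → ℝ)
    (hPcond : ∀ d, Pcond d =
      ∑ x ∈ Finset.univ.filter (fun x : Fin n → D => x i = d),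
        Q x y * ∏ j ∈ Finset.univ.erase i, p j (x j)) :
    Real.log (Finset.univ.sup' Finset.univ_nonempty (fun d => Pcond d / PY)) ≤ ε := by
  have hp0 : ∀ j d, 0 ≤ p j d := fun j d => (hp j d).le
  obtain rfl : Pcond = sliceSum (Q · y) p i := funext hPcond
  rw [sum_mul_prod_eq_sum_mul_sliceSum] at hPY
  have hslice : ∀ d d', sliceSum (Q · y) p i d ≤ exp ε * sliceSum (Q · y) p i d' :=
    sliceSum_le_mul_sliceSum hp0 fun x x' hxx' => hDP x x' ⟨i, hxx'⟩ y
  have hupper : ∀ d, sliceSum (Q · y) p i d / PY ≤ exp ε := fun d => by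
    rw [div_le_iff₀ hPYpos, hPY]
    exact le_mul_sum_weight_mul (hp0 i) (hps i) hslice d
  have hpos : ∀ d, 0 < sliceSum (Q · y) p i d / PY := fun d => by
    refine div_pos (pos_of_mul_pos_right ?_ (exp_pos ε).le) hPYpos
    exact hPYpos.trans_le (hPY ▸ sum_weight_mul_le_mul (hp0 i) (hps i) hslice d)
  obtain ⟨d⟩ := ‹Nonempty D›
  have hsup_pos := (hpos d).trans_le
    (le_sup' (fun d => sliceSum (Q · y) p i d / PY) (mem_univ d))
  exact (Real.log_le_log hsup_pos (sup'_le _ _ fun d _ => hupper d)).trans_eq (Real.log_exp ε)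

/-- If a mechanism `Q` on `𝒳 = Dⁿ` satisfies `ε`-DP, then for every full-support
product prior `p = ∏ᵢ pᵢ`, every index `i`, and every output `y` with positive
probability, the PML of the `i`-th entry satisfies `ℓ(Dᵢ → y) ≤ ε`. -/
theorem dp_implies_pml_of_entry {n : ℕ} {D Y : Type*} [Fintype D] [Nonempty D]
    [DecidableEq D] [Fintype Y]
    (Q : (Fin n → D) → Y → ℝ) (hQ : ∀ x y, 0 ≤ Q x y) (hQs : ∀ x, ∑ y, Q x y = 1)
    (ε : ℝ) (hε : 0 ≤ ε)
    (hDP : ∀ x x' : Fin n → D, (∃ i, ∀ j, j ≠ i → x j = x' j) →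
      ∀ y, Q x y ≤ Real.exp ε * Q x' y)
    (p : Fin n → D → ℝ) (hp : ∀ i d, 0 < p i d) (hps : ∀ i, ∑ d, p i d = 1)
    (i : Fin n) (y : Y)
    (PY : ℝ) (hPY : PY = ∑ x : Fin n → D, Q x y * ∏ j, p j (x j)) (hPYpos : 0 < PY)
    (Pcond : D → ℝ)
    (hPcond : ∀ d, Pcond d =
      ∑ x ∈ Finset.univ.filter (fun x : Fin n → D => x i = d),
        Q x y * ∏ j ∈ Finset.univ.erase i, p j (x j)) :
    Real.log (Finset.univ.sup' Finset.univ_nonempty (fun d => Pcond d / PY)) ≤ ε :=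
  dp_implies_pml_of_entry_general Q ε hDP p hp hps i y PY hPY hPYpos Pcond hPcond
end

section
/- Conversely, if for all product distributions P_X ∈ 𝒬_𝒳 (full support), all indices i ∈ [n], and all outputs y the pointwise maximal leakage satisfies ℓ(D_i → y) ≤ ε, then the mechanism P_{Y|X} satisfies ε-differential privacy. -/
/-!
Take as prior for every entry `j` the point mass at `x' j` mixed with weight `δ` into the uniform
distribution on `D`. Under this prior the output marginal at `y` is at most `Q x' y + δ ∑ Q · y`,
since every other database has prior mass at most `δ`, while the likelihood `P_{Y|D_i = x i}(y)`
is at least `Q x y (1 - δ)^(n-1)`, since `x` agrees with `x'` off `i`. The leakage bound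
compares the two, and `δ → 0` gives `Q x y ≤ exp ε * Q x' y`.
-/

open Finset Real Filter Topology

lemma div_card_le_self (D : Type*) [Fintype D] [Nonempty D] {δ : ℝ} (hδ : 0 ≤ δ) :
    δ / Fintype.card D ≤ δ :=
  div_le_self hδ (by exact_mod_cast Fintype.card_pos)

section Prior

variable {ι D : Type*} [Fintype D] [DecidableEq D]

noncomputable def smoothedPointMass (δ : ℝ) (c : ι → D) (j : ι) (d : D) : ℝ :=
  δ / Fintype.card D + if d = c j then 1 - δ else 0

variable [Nonempty D] {δ : ℝ} {c : ι → D} {j : ι} {d : D}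

lemma smoothedPointMass_pos (hδ : δ ∈ Set.Ioc (0 : ℝ) 1) : 0 < smoothedPointMass δ c j d := by
  have : 0 < δ / Fintype.card D := div_pos hδ.1 (by exact_mod_cast Fintype.card_pos)
  unfold smoothedPointMass
  split_ifs <;> linarith [hδ.2]

lemma sum_smoothedPointMass (δ : ℝ) (c : ι → D) (j : ι) : ∑ d, smoothedPointMass δ c j d = 1 := by
  have : (Fintype.card D : ℝ) ≠ 0 := by exact_mod_cast Fintype.card_ne_zero
  simp only [smoothedPointMass, sum_add_distrib, sum_const, card_univ, nsmul_eq_mul,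
    sum_ite_eq', mem_univ, if_true]
  field_simp
  ring

lemma smoothedPointMass_le_one (hδ : δ ∈ Set.Icc (0 : ℝ) 1) : smoothedPointMass δ c j d ≤ 1 := by
  have := div_card_le_self D hδ.1
  have := hδ.2
  unfold smoothedPointMass
  split_ifs <;> linarith

lemma smoothedPointMass_le_of_ne (hδ : 0 ≤ δ) (hd : d ≠ c j) : smoothedPointMass δ c j d ≤ δ := by
  simpa [smoothedPointMass, hd] using div_card_le_self D hδ

lemma one_sub_le_smoothedPointMass_self (hδ : 0 ≤ δ) : 1 - δ ≤ smoothedPointMass δ c j (c j) := by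
  have : 0 ≤ δ / Fintype.card D := by positivity
  rw [smoothedPointMass, if_pos rfl]
  linarith

end Prior

lemma prod_le_of_le_one_of_le {ι : Type*} [Fintype ι] {f : ι → ℝ} {δ : ℝ}
    (h0 : ∀ j, 0 ≤ f j) (h1 : ∀ j, f j ≤ 1) (j₀ : ι) (hj₀ : f j₀ ≤ δ) : ∏ j, f j ≤ δ := by
  classical
  rw [← mul_prod_erase univ f (mem_univ j₀)]
  exact (mul_le_of_le_one_right (h0 j₀) (prod_le_one (fun j _ => h0 j) fun j _ => h1 j)).trans hj₀

lemma sum_mul_le_add_mul_sum {α : Type*} [Fintype α] {Q w : α → ℝ} {δ : ℝ}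
    (c : α) (hQ : ∀ a, 0 ≤ Q a) (hδ : 0 ≤ δ) (hw : ∀ a, w a ≤ 1) (hwc : ∀ a ≠ c, w a ≤ δ) :
    ∑ a, Q a * w a ≤ Q c + δ * ∑ a, Q a := by
  classical
  have hpt : ∀ a, Q a * w a ≤ (if a = c then Q a else 0) + δ * Q a := by
    intro a
    split_ifs with ha
    · nlinarith [hQ a, hw a]
    · nlinarith [hQ a, hwc a ha]
  calc ∑ a, Q a * w a ≤ ∑ a, ((if a = c then Q a else 0) + δ * Q a) := sum_le_sum fun a _ => hpt a
    _ = Q c + δ * ∑ a, Q a := by rw [sum_add_distrib, sum_ite_eq' univ c, ← mul_sum]; simp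

lemma le_of_forall_mul_one_sub_pow_le {a b C : ℝ} {k : ℕ}
    (h : ∀ δ ∈ Set.Ioo (0 : ℝ) 1, a * (1 - δ) ^ k ≤ b + δ * C) : a ≤ b := by
  have hl : Tendsto (fun δ : ℝ => a * (1 - δ) ^ k) (𝓝[>] 0) (𝓝 a) := by
    have : Continuous fun δ : ℝ => a * (1 - δ) ^ k := by fun_prop
    simpa using (this.tendsto 0).mono_left nhdsWithin_le_nhds
  have hr : Tendsto (fun δ : ℝ => b + δ * C) (𝓝[>] 0) (𝓝 b) := by
    have : Continuous fun δ : ℝ => b + δ * C := by fun_prop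
    simpa using (this.tendsto 0).mono_left nhdsWithin_le_nhds
  exact le_of_tendsto_of_tendsto hl hr <|
    eventually_of_mem (Ioo_mem_nhdsGT_of_mem (Set.left_mem_Ico.mpr one_pos)) h

lemma le_exp_mul_of_log_sup'_div_le {α : Type*} {s : Finset α} (hs : s.Nonempty) {f : α → ℝ}
    {Z ε : ℝ} {d : α} (hd : d ∈ s) (hf : 0 < f d) (hZ : 0 < Z)
    (h : log (s.sup' hs fun d => f d / Z) ≤ ε) : f d ≤ exp ε * Z := by
  have hle : f d / Z ≤ s.sup' hs fun d => f d / Z := le_sup' (fun d => f d / Z) hd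
  have hsup := (log_le_iff_le_exp ((div_pos hf hZ).trans_le hle)).mp h
  rw [← div_le_iff₀ hZ]
  exact hle.trans hsup

section Leakage

variable {ι D Y : Type*} [Fintype ι] [DecidableEq ι] [Fintype D]
  (Q : (ι → D) → Y → ℝ) (p : ι → D → ℝ)

/-- `P_Y(y)` under the product prior `p`. -/
def outputMarginal (y : Y) : ℝ := ∑ x, Q x y * ∏ j, p j (x j)

variable {Q p}

lemma outputMarginal_pos (hQ : ∀ x y, 0 ≤ Q x y) (hp : ∀ j d, 0 < p j d) {x : ι → D} {y : Y}
    (hx : 0 < Q x y) : 0 < outputMarginal Q p y :=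
  sum_pos' (fun x _ => mul_nonneg (hQ x y) (prod_nonneg fun j _ => (hp j _).le))
    ⟨x, mem_univ x, mul_pos hx (prod_pos fun j _ => hp j _)⟩

variable [DecidableEq D] [Nonempty D]

lemma outputMarginal_smoothedPointMass_le (hQ : ∀ x y, 0 ≤ Q x y) {δ : ℝ}
    (hδ : δ ∈ Set.Ioc (0 : ℝ) 1) (c : ι → D) (y : Y) :
    outputMarginal Q (smoothedPointMass δ c) y ≤ Q c y + δ * ∑ x, Q x y := by
  refine sum_mul_le_add_mul_sum c (hQ · y) hδ.1.le
    (fun x => prod_le_one (fun j _ => (smoothedPointMass_pos hδ).le)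
      fun j _ => smoothedPointMass_le_one (Set.Ioc_subset_Icc_self hδ)) fun x hx => ?_
  obtain ⟨j, hj⟩ := Function.ne_iff.mp hx
  exact prod_le_of_le_one_of_le (fun _ => (smoothedPointMass_pos hδ).le)
    (fun _ => smoothedPointMass_le_one (Set.Ioc_subset_Icc_self hδ)) j
    (smoothedPointMass_le_of_ne hδ.1.le hj)

variable (Q p) in
/-- `P_{Y|D_i=d}(y)` under the product prior `p` -/
def entryLikelihood (i : ι) (y : Y) (d : D) : ℝ :=
  ∑ x ∈ univ.filter (fun x : ι → D => x i = d), Q x y * ∏ j ∈ univ.erase i, p j (x j)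

lemma mul_one_sub_pow_le_entryLikelihood (hQ : ∀ x y, 0 ≤ Q x y) {δ : ℝ}
    (hδ : δ ∈ Set.Ioc (0 : ℝ) 1) {x c : ι → D} {i : ι} (hxc : ∀ j, j ≠ i → x j = c j) (y : Y) :
    Q x y * (1 - δ) ^ (univ.erase i).card ≤
      entryLikelihood Q (smoothedPointMass δ c) i y (x i) := by
  have hprod :
      (1 - δ) ^ (univ.erase i).card ≤ ∏ j ∈ univ.erase i, smoothedPointMass δ c j (x j) := by
    rw [← prod_const]
    refine prod_le_prod (fun _ _ => by linarith [hδ.2]) fun j hj => ?_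
    rw [hxc j (ne_of_mem_erase hj)]
    exact one_sub_le_smoothedPointMass_self hδ.1.le
  refine (mul_le_mul_of_nonneg_left hprod (hQ x y)).trans ?_
  exact single_le_sum (f := fun x => Q x y * ∏ j ∈ univ.erase i, smoothedPointMass δ c j (x j))
    (fun x _ => mul_nonneg (hQ x y) (prod_nonneg fun j _ => (smoothedPointMass_pos hδ).le))
    (mem_filter.mpr ⟨mem_univ x, rfl⟩)

end Leakage

theorem pml_of_entries_implies_dp_general {n : ℕ} {D Y : Type*} [Fintype D] [Nonempty D]
    [DecidableEq D]
    (Q : (Fin n → D) → Y → ℝ) (hQ : ∀ x y, 0 ≤ Q x y)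
    (ε : ℝ)
    (hPML : ∀ p : Fin n → D → ℝ, (∀ i d, 0 < p i d) → (∀ i, ∑ d, p i d = 1) →
      ∀ i : Fin n, ∀ y : Y,
        0 < (∑ x : Fin n → D, Q x y * ∏ j, p j (x j)) →
        Real.log (Finset.univ.sup' Finset.univ_nonempty (fun d : D =>
          (∑ x ∈ Finset.univ.filter (fun x : Fin n → D => x i = d),
            Q x y * ∏ j ∈ Finset.univ.erase i, p j (x j)) /
          (∑ x : Fin n → D, Q x y * ∏ j, p j (x j)))) ≤ ε) :
    ∀ x x' : Fin n → D, (∃ i, ∀ j, j ≠ i → x j = x' j) →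
      ∀ y, Q x y ≤ Real.exp ε * Q x' y := by
  rintro x x' ⟨i, hxx'⟩ y
  rcases (hQ x y).eq_or_lt with hx0 | hxpos
  · rw [← hx0]
    exact mul_nonneg (exp_nonneg ε) (hQ x' y)
  refine le_of_forall_mul_one_sub_pow_le (k := (univ.erase i).card)
    (C := exp ε * ∑ x'', Q x'' y) fun δ hδ => ?_
  have hδ' := Set.Ioo_subset_Ioc_self hδ
  set p := smoothedPointMass δ x'
  have hp : ∀ j d, 0 < p j d := fun _ _ => smoothedPointMass_pos hδ'
  have hZ : 0 < outputMarginal Q p y := outputMarginal_pos hQ hp hxpos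
  have hlower := mul_one_sub_pow_le_entryLikelihood hQ hδ' hxx' y
  calc Q x y * (1 - δ) ^ (univ.erase i).card ≤ entryLikelihood Q p i y (x i) := hlower
    _ ≤ exp ε * outputMarginal Q p y :=
        le_exp_mul_of_log_sup'_div_le univ_nonempty (mem_univ _)
          ((mul_pos hxpos (pow_pos (sub_pos.mpr hδ.2) _)).trans_le hlower) hZ
          (hPML p hp (sum_smoothedPointMass δ x') i y hZ)
    _ ≤ exp ε * (Q x' y + δ * ∑ x'', Q x'' y) :=
        mul_le_mul_of_nonneg_left (outputMarginal_smoothedPointMass_le hQ hδ' x' y) (exp_nonneg ε)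
    _ = exp ε * Q x' y + δ * (exp ε * ∑ x'', Q x'' y) := by ring

/-- Converse: if for all full-support product priors, all indices `i`, and all
outputs `y` with positive probability the PML of the `i`-th entry is at most `ε`,
then the mechanism satisfies `ε`-DP. -/
theorem pml_of_entries_implies_dp {n : ℕ} {D Y : Type*} [Fintype D] [Nonempty D]
    [DecidableEq D] [Fintype Y]
    (Q : (Fin n → D) → Y → ℝ) (hQ : ∀ x y, 0 ≤ Q x y) (hQs : ∀ x, ∑ y, Q x y = 1)
    (ε : ℝ) (hε : 0 ≤ ε)
    (hPML : ∀ p : Fin n → D → ℝ, (∀ i d, 0 < p i d) → (∀ i, ∑ d, p i d = 1) →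
      ∀ i : Fin n, ∀ y : Y,
        0 < (∑ x : Fin n → D, Q x y * ∏ j, p j (x j)) →
        Real.log (Finset.univ.sup' Finset.univ_nonempty (fun d : D =>
          (∑ x ∈ Finset.univ.filter (fun x : Fin n → D => x i = d),
            Q x y * ∏ j ∈ Finset.univ.erase i, p j (x j)) /
          (∑ x : Fin n → D, Q x y * ∏ j, p j (x j)))) ≤ ε) :
    ∀ x x' : Fin n → D, (∃ i, ∀ j, j ≠ i → x j = x' j) →
      ∀ y, Q x y ≤ Real.exp ε * Q x' y :=
  pml_of_entries_implies_dp_general Q hQ ε hPML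
end

section
/- In the correlated binary database model with the counting-frequency Laplace mechanism, the conditional output density given D₁ = 0 at any y ≤ 0 equals (1/(2b(2ⁿ−1))) e^{y/b} [ 2ⁿη − 1 + (1−η)(1 + e^{−1/(b(n+1))})ⁿ ]. -/
/-!
For `y ≤ 0` every mean `k / (n + 1)` lies to the right of `y`, so the Laplace density is
`e^{y/b} tᵏ` with `t = e^{-1/(b(n+1))}`, and summing `tᵏ` over all databases gives `(1 + t)ⁿ`
by the binomial theorem. The prior is uniform up to the extra mass `η - (1-η)/(2ⁿ-1)` at the
all-zero database, whose density is `e^{y/b}`; collecting terms gives the closed form.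
-/

open Finset Real

theorem Fintype.sum_pow_card_filter_true {ι R : Type*} [Fintype ι] [DecidableEq ι]
    [CommSemiring R] (t : R) :
    ∑ d : ι → Bool, t ^ #{j | d j = true} = (1 + t) ^ Fintype.card ι := by
  calc ∑ d : ι → Bool, t ^ #{j | d j = true}
      = ∑ d : ι → Bool, ∏ j, if d j = true then t else 1 := by
        simp only [← prod_filter, prod_const]
    _ = ∏ _j : ι, ∑ v : Bool, if v = true then t else 1 := by rw [Fintype.prod_sum]
    _ = (1 + t) ^ Fintype.card ι := by simp [add_comm]

theorem Fintype.sum_ite_eq_mul {α R : Type*} [Fintype α] [DecidableEq α] [CommRing R]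
    (a : α) (p q : R) (f : α → R) :
    ∑ x, (if x = a then p else q) * f x = q * ∑ x, f x + (p - q) * f a := by
  have hsplit : ∀ x,
      (if x = a then p else q) * f x = q * f x + if x = a then (p - q) * f a else 0 := by
    intro x
    split_ifs with h
    · subst h; ring
    · ring
  simp only [hsplit, sum_add_distrib, ← mul_sum, sum_ite_eq']

theorem Real.exp_neg_abs_sub_div_of_le {x y : ℝ} (h : y ≤ x) (b : ℝ) :
    exp (-|y - x| / b) = exp (y / b) * exp (-x / b) := by
  rw [abs_of_nonpos (sub_nonpos.mpr h), ← exp_add]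
  ring_nf

theorem laplace_density_at_count_freq_of_nonpos {n k : ℕ} {y : ℝ} (hy : y ≤ 0) (b : ℝ) :
    1 / (2 * b) * exp (-|y - k / (n + 1)| / b) =
      1 / (2 * b) * exp (y / b) * exp (-1 / (b * (n + 1))) ^ k := by
  rw [exp_neg_abs_sub_div_of_le (hy.trans (by positivity)), ← exp_nat_mul, mul_assoc]
  simp only [div_eq_mul_inv, mul_inv]
  ring_nf

theorem cond_density_given_zero_general {n : ℕ} (hn : 1 ≤ n) (b η y : ℝ)
    (hy : y ≤ 0) :
    (∑ d : Fin n → Bool,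
        (if d = (fun _ => false) then η else (1 - η) / ((2 : ℝ) ^ n - 1)) *
          ((1 / (2 * b)) * Real.exp (-|y -
            ((Finset.univ.filter (fun j => d j = true)).card : ℝ) / (n + 1)| / b))) =
    (1 / (2 * b * ((2 : ℝ) ^ n - 1))) * Real.exp (y / b) *
      ((2 : ℝ) ^ n * η - 1 +
        (1 - η) * (1 + Real.exp (-1 / (b * (n + 1)))) ^ n) := by
  have hcount : ∑ d : Fin n → Bool, exp (-1 / (b * (n + 1))) ^ #{j | d j = true} =
      (1 + exp (-1 / (b * (n + 1)))) ^ n := by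
    simpa using Fintype.sum_pow_card_filter_true (ι := Fin n) (exp (-1 / (b * (n + 1))))
  have hpow : (2 : ℝ) ^ n - 1 ≠ 0 := by
    have : (2 : ℝ) ≤ 2 ^ n := by simpa using pow_le_pow_right₀ one_le_two hn
    linarith
  simp only [laplace_density_at_count_freq_of_nonpos hy, Fintype.sum_ite_eq_mul, ← mul_sum,
    hcount, Bool.false_eq_true, filter_false, card_empty, pow_zero]
  field_simp
  ring

/-- Closed form of the conditional output density given `D₁ = 0` at any `y ≤ 0` in
the correlated binary database model with the counting-frequency Laplace mechanism. -/
theorem cond_density_given_zero {n : ℕ} (hn : 1 ≤ n) (b η y : ℝ)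
    (hb : 0 < b) (hη0 : 0 < η) (hη1 : η < 1) (hy : y ≤ 0) :
    (∑ d : Fin n → Bool,
        (if d = (fun _ => false) then η else (1 - η) / ((2 : ℝ) ^ n - 1)) *
          ((1 / (2 * b)) * Real.exp (-|y -
            ((Finset.univ.filter (fun j => d j = true)).card : ℝ) / (n + 1)| / b))) =
    (1 / (2 * b * ((2 : ℝ) ^ n - 1))) * Real.exp (y / b) *
      ((2 : ℝ) ^ n * η - 1 +
        (1 - η) * (1 + Real.exp (-1 / (b * (n + 1)))) ^ n) :=
  cond_density_given_zero_general hn b η y hy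
end

section
/- In the correlated binary database model with the counting-frequency Laplace mechanism with scale b = 1/(ε(n+1)), for every y ≤ 0 the ratio P_{Y|D₁=0}(y)/P_Y(y) is at least (2ⁿη + (1+e^{−ε})ⁿ(1−η) − 1) / (2ⁿη α + (2 e^{−ε})ⁿ η e^{−ε}(1−α) + (1+e^{−ε})ⁿ(1−η)). -/
open Finset Real

/-!
For `y ≤ 0` the output lies below every normalized count `m/(n+1)`, so the Laplace density of a
database with `m` ones is `exp(ε(n+1)y) · (e^{-ε})^m`. Summing over the `2ⁿ` strings with the
binomial theorem gives `P_{Y|D₁=0}(y)` and `P_{Y|D₁=1}(y)` in closed form, with a common positive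
factor that cancels in the ratio; the bound then follows by adding nonnegative terms to the
denominator.
-/

theorem Fintype.sum_pow_card_filter {ι R : Type*} [Fintype ι] [DecidableEq ι] [CommSemiring R]
    (x : R) :
    ∑ d : ι → Bool, x ^ #{i | d i = true} = (1 + x) ^ Fintype.card ι := by
  have hprod (d : ι → Bool) : x ^ #{i | d i = true} = ∏ i, if d i = true then x else 1 := by
    rw [prod_ite, prod_const, prod_const_one, mul_one]
  simp_rw [hprod]
  rw [← Fintype.prod_sum (fun _ b => if b = true then x else 1)]
  simp [add_comm]

theorem Real.exp_neg_mul_abs_sub_nat_div {ε N y : ℝ} (hN : 0 < N) (hy : y ≤ 0) (m : ℕ) :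
    exp (-(ε * N) * |y - m / N|) = exp (ε * N * y) * exp (-ε) ^ m := by
  have hm : 0 ≤ (m : ℝ) / N := by positivity
  rw [abs_of_nonpos (by linarith), ← exp_nat_mul, ← exp_add]
  congr 1
  field_simp
  ring

theorem sum_prior_mul_laplace_of_nonpos_zero {n : ℕ} {ε y : ℝ} (η w : ℝ) (hy : y ≤ 0) :
    ∑ d : Fin n → Bool, (if d = (fun _ => false) then η else w) *
        ((ε * (n + 1) / 2) * exp (-(ε * (n + 1)) * |y - (#{j | d j = true} : ℝ) / (n + 1)|)) =
      ε * (n + 1) / 2 * exp (ε * (n + 1) * y) * (η + w * ((1 + exp (-ε)) ^ n - 1)) := by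
  simp_rw [exp_neg_mul_abs_sub_nat_div (by positivity : (0 : ℝ) < n + 1) hy,
    Fintype.sum_ite_eq_mul, ← mul_sum, Fintype.sum_pow_card_filter, Fintype.card_fin]
  simp only [Bool.false_eq_true, filter_false, card_empty, pow_zero, mul_one]
  ring

theorem sum_prior_mul_laplace_of_nonpos_one {n : ℕ} {ε y : ℝ} (η w : ℝ) (hy : y ≤ 0) :
    ∑ d : Fin n → Bool, (if d = (fun _ => true) then η else w) *
        ((ε * (n + 1) / 2) * exp (-(ε * (n + 1)) * |y - (1 + (#{j | d j = true} : ℝ)) / (n + 1)|)) =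
      ε * (n + 1) / 2 * exp (ε * (n + 1) * y) * exp (-ε) *
        (η * exp (-ε) ^ n + w * ((1 + exp (-ε)) ^ n - exp (-ε) ^ n)) := by
  have hcast (d : Fin n → Bool) :
      1 + (#{j | d j = true} : ℝ) = ((1 + #{j | d j = true} : ℕ) : ℝ) := by
    push_cast
    rfl
  simp_rw [hcast, exp_neg_mul_abs_sub_nat_div (by positivity : (0 : ℝ) < n + 1) hy, pow_add,
    Fintype.sum_ite_eq_mul, ← mul_sum, Fintype.sum_pow_card_filter, Fintype.card_fin]
  simp only [pow_one, filter_true, card_univ, Fintype.card_fin]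
  ring

theorem mixture_denominator_le {n : ℕ} {α η E : ℝ} (hE0 : 0 ≤ E) (hE1 : E ≤ 1)
    (hα0 : 0 ≤ α) (hα1 : α ≤ 1) (hη0 : 0 ≤ η) (hη1 : η ≤ 1) :
    α * (2 ^ n * η + (1 + E) ^ n * (1 - η) - 1) +
        (1 - α) * (E * ((2 ^ n - 1) * η * E ^ n + (1 - η) * ((1 + E) ^ n - E ^ n))) ≤
      2 ^ n * η * α + (2 * E) ^ n * η * E * (1 - α) + (1 + E) ^ n * (1 - η) := by
  have hgap : 0 ≤ (1 - E) * (1 + E) ^ n + E * E ^ n := by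
    have := sub_nonneg.2 hE1
    positivity
  have hα1' := sub_nonneg.2 hα1
  have hη1' := sub_nonneg.2 hη1
  calc _ ≤ _ + ((1 - α) * η * (E * E ^ n) + α +
          (1 - α) * (1 - η) * ((1 - E) * (1 + E) ^ n + E * E ^ n)) :=
        le_add_of_nonneg_right (by positivity)
    _ = _ := by rw [mul_pow]; ring

theorem mixture_ratio_lower_bound {n : ℕ} {α η E C : ℝ} (hC : 0 < C) (hE0 : 0 < E) (hE1 : E ≤ 1)
    (hα0 : 0 < α) (hα1 : α ≤ 1) (hη0 : 0 < η) (hη1 : η ≤ 1) (hηn : 1 < 2 ^ n * η) :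
    (2 ^ n * η + (1 + E) ^ n * (1 - η) - 1) /
        (2 ^ n * η * α + (2 * E) ^ n * η * E * (1 - α) + (1 + E) ^ n * (1 - η)) ≤
      C * (η + (1 - η) / (2 ^ n - 1) * ((1 + E) ^ n - 1)) /
        (α * (C * (η + (1 - η) / (2 ^ n - 1) * ((1 + E) ^ n - 1))) + (1 - α) *
          (C * E * (η * E ^ n + (1 - η) / (2 ^ n - 1) * ((1 + E) ^ n - E ^ n)))) := by
  set S := (1 + E) ^ n
  set A := 2 ^ n * η + S * (1 - η) - 1
  set B := (2 ^ n - 1) * η * E ^ n + (1 - η) * (S - E ^ n)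
  have h2n : (0 : ℝ) < 2 ^ n - 1 := by nlinarith [pow_pos (two_pos : (0 : ℝ) < 2) n]
  have hA : 0 < A := by
    have : 0 ≤ S * (1 - η) := mul_nonneg (by positivity) (sub_nonneg.2 hη1)
    linarith
  have hB : 0 ≤ B := by
    have := sub_nonneg.2 (pow_le_pow_left₀ hE0.le (le_add_of_nonneg_left zero_le_one) n)
    have := sub_nonneg.2 hη1
    positivity
  set K := C / (2 ^ n - 1)
  have hP0 : C * (η + (1 - η) / (2 ^ n - 1) * (S - 1)) = K * A := by
    simp only [K, A]
    field_simp
    ring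
  have hP1 : C * E * (η * E ^ n + (1 - η) / (2 ^ n - 1) * (S - E ^ n)) = K * (E * B) := by
    simp only [K, B]
    field_simp
  have hmix : α * (K * A) + (1 - α) * (K * (E * B)) = K * (α * A + (1 - α) * (E * B)) := by ring
  rw [hP0, hP1, hmix, mul_div_mul_left _ _ (by positivity)]
  have := sub_nonneg.2 hα1
  exact div_le_div_of_nonneg_left hA.le (by positivity)
    (mixture_denominator_le hE0.le hE1 hα0.le hα1 hη0.le hη1)

theorem ratio_lower_bound_general {n : ℕ} (ε α η y : ℝ)
    (hε : 0 < ε) (hα0 : 0 < α) (hα : α < 1 / 2) (hη0 : 0 < η) (hη1 : η < 1)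
    (hηn : 1 < (2 : ℝ) ^ n * η) (hy : y ≤ 0)
    (P0 P1 : ℝ)
    (hP0 : P0 = ∑ d : Fin n → Bool,
        (if d = (fun _ => false) then η else (1 - η) / ((2 : ℝ) ^ n - 1)) *
          ((ε * (n + 1) / 2) * Real.exp (-(ε * (n + 1)) * |y -
            ((Finset.univ.filter (fun j => d j = true)).card : ℝ) / (n + 1)|)))
    (hP1 : P1 = ∑ d : Fin n → Bool,
        (if d = (fun _ => true) then η else (1 - η) / ((2 : ℝ) ^ n - 1)) *
          ((ε * (n + 1) / 2) * Real.exp (-(ε * (n + 1)) * |y - (1 +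
            ((Finset.univ.filter (fun j => d j = true)).card : ℝ)) / (n + 1)|))) :
    ((2 : ℝ) ^ n * η + (1 + Real.exp (-ε)) ^ n * (1 - η) - 1) /
      ((2 : ℝ) ^ n * η * α + (2 * Real.exp (-ε)) ^ n * η * Real.exp (-ε) * (1 - α) +
        (1 + Real.exp (-ε)) ^ n * (1 - η)) ≤
    P0 / (α * P0 + (1 - α) * P1) := by
  rw [hP0, hP1, sum_prior_mul_laplace_of_nonpos_zero _ _ hy,
    sum_prior_mul_laplace_of_nonpos_one _ _ hy]
  exact mixture_ratio_lower_bound (by positivity) (exp_pos _) (exp_le_one_iff.2 (by linarith))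
    hα0 (by linarith) hη0 hη1.le hηn

/-- With Laplace scale `b = 1/(ε(n+1))`, for every `y ≤ 0` the ratio
`P_{Y|D₁=0}(y) / P_Y(y)` is at least the stated lower bound. -/
theorem ratio_lower_bound {n : ℕ} (hn : 1 ≤ n) (ε α η y : ℝ)
    (hε : 0 < ε) (hα0 : 0 < α) (hα : α < 1 / 2) (hη0 : 0 < η) (hη1 : η < 1)
    (hηn : 1 < (2 : ℝ) ^ n * η) (hy : y ≤ 0)
    (P0 P1 : ℝ)
    (hP0 : P0 = ∑ d : Fin n → Bool,
        (if d = (fun _ => false) then η else (1 - η) / ((2 : ℝ) ^ n - 1)) *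
          ((ε * (n + 1) / 2) * Real.exp (-(ε * (n + 1)) * |y -
            ((Finset.univ.filter (fun j => d j = true)).card : ℝ) / (n + 1)|)))
    (hP1 : P1 = ∑ d : Fin n → Bool,
        (if d = (fun _ => true) then η else (1 - η) / ((2 : ℝ) ^ n - 1)) *
          ((ε * (n + 1) / 2) * Real.exp (-(ε * (n + 1)) * |y - (1 +
            ((Finset.univ.filter (fun j => d j = true)).card : ℝ)) / (n + 1)|))) :
    ((2 : ℝ) ^ n * η + (1 + Real.exp (-ε)) ^ n * (1 - η) - 1) /
      ((2 : ℝ) ^ n * η * α + (2 * Real.exp (-ε)) ^ n * η * Real.exp (-ε) * (1 - α) +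
        (1 + Real.exp (-ε)) ^ n * (1 - η)) ≤
    P0 / (α * P0 + (1 - α) * P1) :=
  ratio_lower_bound_general ε α η y hε hα0 hα hη0 hη1 hηn hy P0 P1 hP0 hP1
end

section
/- For every δ > 0 and ε > 0 there exist n, a distribution on binary databases X = (D₁,…,D_{n+1}), an ε-differentially private mechanism (the Laplace mechanism for the empirical frequency query), and an output y such that ℓ(D₁→y) > log(1/min_d P_{D₁}(d)) − δ. Concretely: with the correlated model with parameters α ∈ (0,1/2), η ∈ (0,1) and Laplace scale 1/(ε(n+1)), for any δ > 0 there exists N such that for all n ≥ N and all y ≤ 0, log(P_{Y|D₁=0}(y)/P_Y(y)) > log(1/α) − δ. -/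
/-!
For `y ≤ 0` every output lies below every possible query value, so each Laplace likelihood
factors as `exp (ε (n+1) y) · exp (-ε)^‖x‖₁`. The PML ratio therefore becomes
`S₀ / (α S₀ + (1 - α) e^{-ε} S₁)`, where `S_j` is the generating function of the number of ones
given `D₁ = j`, evaluated at `e^{-ε} < 1`. The all-zeros database keeps `S₀ ≥ η`, whereas given
`D₁ = 1` the remaining entries are all ones or nearly uniform, so
`S₁ ≤ η e^{-εn} + 2 (1 - η) ((1 + e^{-ε}) / 2)^n → 0`, and the ratio tends to `1 / α`.
-/

open Finset Real Filter Topology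

theorem sum_pow_card_filter_eq {ι R : Type*} [Fintype ι] [DecidableEq ι] [CommSemiring R]
    (r : R) :
    ∑ d : ι → Bool, r ^ #{i | d i = true} = (1 + r) ^ Fintype.card ι := by
  have hprod (d : ι → Bool) :
      r ^ #{i | d i = true} = ∏ i, if d i = true then r else 1 := by
    rw [prod_ite, prod_const, prod_const, one_pow, mul_one]
  calc ∑ d : ι → Bool, r ^ #{i | d i = true}
      = ∑ d : ι → Bool, ∏ i, if d i = true then r else 1 := by simp only [hprod]
    _ = ∏ _i : ι, ∑ b : Bool, if b = true then r else 1 :=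
        (Fintype.prod_sum fun _ b => if b = true then r else 1).symm
    _ = (1 + r) ^ Fintype.card ι := by simp [add_comm]

theorem sum_mul_laplace_of_nonpos {ι : Type*} [Fintype ι] (p x : ι → ℝ) {ε m y c : ℝ}
    (hm : 0 < m) (hy : y ≤ 0) (hx : ∀ i, 0 ≤ x i) :
    ∑ i, p i * (c * exp (-(ε * m) * |y - x i / m|)) =
      c * exp (ε * m * y) * ∑ i, p i * exp (-(ε * x i)) := by
  rw [mul_sum]
  refine sum_congr rfl fun i _ => ?_
  rw [abs_of_nonpos (by linarith [div_nonneg (hx i) hm.le])]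
  have hexponent : -(ε * m) * -(y - x i / m) = ε * m * y + -(ε * x i) := by
    field_simp
    ring
  rw [hexponent, exp_add]
  ring

theorem sum_mul_laplace_natCast_of_nonpos {ι : Type*} [Fintype ι] (p : ι → ℝ) (k : ι → ℕ)
    {ε m y c : ℝ} (hm : 0 < m) (hy : y ≤ 0) :
    ∑ i, p i * (c * exp (-(ε * m) * |y - (k i : ℝ) / m|)) =
      c * exp (ε * m * y) * ∑ i, p i * exp (-ε) ^ k i := by
  rw [sum_mul_laplace_of_nonpos p _ hm hy fun i => (k i).cast_nonneg]
  simp only [← exp_nat_mul, mul_neg, mul_comm ε]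

theorem sum_mul_laplace_one_add_natCast_of_nonpos {ι : Type*} [Fintype ι] (p : ι → ℝ)
    (k : ι → ℕ) {ε m y c : ℝ} (hm : 0 < m) (hy : y ≤ 0) :
    ∑ i, p i * (c * exp (-(ε * m) * |y - (1 + k i : ℝ) / m|)) =
      c * exp (ε * m * y) * (exp (-ε) * ∑ i, p i * exp (-ε) ^ k i) := by
  rw [sum_mul_laplace_of_nonpos p (fun i => 1 + (k i : ℝ)) hm hy fun i => by positivity]
  congr 1
  rw [mul_sum]
  refine sum_congr rfl fun i _ => ?_
  rw [← exp_nat_mul, mul_left_comm, ← exp_add]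
  ring_nf

theorem log_one_div_sub_lt_log_div_mixture {α β δ L₀ L₁ : ℝ} (hα : 0 < α) (hL₀ : 0 < L₀)
    (hβL₁ : 0 ≤ β * L₁) (h : β * L₁ < α * L₀ * (exp δ - 1)) :
    log (1 / α) - δ < log (L₀ / (α * L₀ + β * L₁)) := by
  have hden : 0 < α * L₀ + β * L₁ := by positivity
  have hratio : 1 / (α * exp δ) < L₀ / (α * L₀ + β * L₁) := by
    rw [div_lt_div_iff₀ (by positivity) hden]
    linarith
  calc log (1 / α) - δ = log (1 / (α * exp δ)) := by
        rw [one_div, one_div, log_inv, log_inv, log_mul hα.ne' (exp_pos δ).ne', log_exp]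
        ring
    _ < log (L₀ / (α * L₀ + β * L₁)) := log_lt_log (by positivity) hratio

/-- `P(D₂ … D_{n+1} = d | D₁ = j)` in the correlated model. -/
noncomputable def corrPrior (η : ℝ) (n : ℕ) (j : Bool) (d : Fin n → Bool) : ℝ :=
  if d = (fun _ => j) then η else (1 - η) / ((2 : ℝ) ^ n - 1)

/-- `E[a ^ ‖(D₂, …, D_{n+1})‖₁ | D₁ = j]`. -/
noncomputable def condPGF (η : ℝ) (n : ℕ) (j : Bool) (a : ℝ) : ℝ :=
  ∑ d : Fin n → Bool, corrPrior η n j d * a ^ #{i | d i = true}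

section

variable {η a : ℝ} {n : ℕ} {j : Bool}

theorem corrPrior_nonneg (hη0 : 0 ≤ η) (hη1 : η ≤ 1) (d : Fin n → Bool) :
    0 ≤ corrPrior η n j d := by
  unfold corrPrior
  split_ifs
  · exact hη0
  · exact div_nonneg (sub_nonneg.2 hη1) (sub_nonneg.2 (one_le_pow₀ one_le_two))

theorem condPGF_nonneg (hη0 : 0 ≤ η) (hη1 : η ≤ 1) (ha : 0 ≤ a) : 0 ≤ condPGF η n j a :=
  sum_nonneg fun d _ => mul_nonneg (corrPrior_nonneg hη0 hη1 d) (pow_nonneg ha _)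

theorem le_condPGF_false (hη0 : 0 ≤ η) (hη1 : η ≤ 1) (ha : 0 ≤ a) : η ≤ condPGF η n false a := by
  calc η = corrPrior η n false (fun _ => false) * a ^ #{i | false = true} := by
        simp [corrPrior]
    _ ≤ condPGF η n false a :=
        single_le_sum (f := fun d => corrPrior η n false d * a ^ #{i | d i = true})
          (fun d _ => mul_nonneg (corrPrior_nonneg hη0 hη1 d) (pow_nonneg ha _)) (mem_univ _)

theorem condPGF_true_le (hη1 : η ≤ 1) (ha : 0 ≤ a) :
    condPGF η n true a ≤ η * a ^ n + (1 - η) / ((2 : ℝ) ^ n - 1) * (1 + a) ^ n := by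
  set q := (1 - η) / ((2 : ℝ) ^ n - 1)
  have hq : 0 ≤ q := div_nonneg (sub_nonneg.2 hη1) (sub_nonneg.2 (one_le_pow₀ one_le_two))
  have hterm (d : Fin n → Bool) : corrPrior η n true d * a ^ #{i | d i = true} ≤
      (if d = fun _ => true then η * a ^ n else 0) + q * a ^ #{i | d i = true} := by
    unfold corrPrior
    split_ifs with hd
    · subst hd
      simpa using mul_nonneg hq (pow_nonneg ha n)
    · simp [q]
  calc condPGF η n true a ≤ _ := sum_le_sum fun d _ => hterm d
    _ = η * a ^ n + q * (1 + a) ^ n := by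
      rw [sum_add_distrib, sum_ite_eq', ← mul_sum, sum_pow_card_filter_eq, Fintype.card_fin]
      simp

theorem tendsto_condPGF_true (hη0 : 0 ≤ η) (hη1 : η ≤ 1) (ha0 : 0 ≤ a) (ha1 : a < 1) :
    Tendsto (fun n => condPGF η n true a) atTop (𝓝 0) := by
  have hlim : Tendsto (fun n : ℕ => η * a ^ n + 2 * (1 - η) * ((1 + a) / 2) ^ n) atTop (𝓝 0) := by
    simpa using ((tendsto_pow_atTop_nhds_zero_of_lt_one ha0 ha1).const_mul η).add
      ((tendsto_pow_atTop_nhds_zero_of_lt_one (by positivity) (by linarith)).const_mul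
        (2 * (1 - η)))
  refine squeeze_zero' (Eventually.of_forall fun n => condPGF_nonneg hη0 hη1 ha0) ?_ hlim
  filter_upwards [eventually_ge_atTop 1] with n hn
  refine (condPGF_true_le hη1 ha0).trans (add_le_add le_rfl ?_)
  have h2n : (2 : ℝ) ≤ 2 ^ n := by simpa using pow_le_pow_right₀ one_le_two hn
  have hq : (1 - η) / ((2 : ℝ) ^ n - 1) ≤ 2 * (1 - η) / 2 ^ n := by
    rw [div_le_div_iff₀ (by linarith) (by linarith)]
    nlinarith
  calc (1 - η) / ((2 : ℝ) ^ n - 1) * (1 + a) ^ n ≤ 2 * (1 - η) / 2 ^ n * (1 + a) ^ n :=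
        mul_le_mul_of_nonneg_right hq (by positivity)
    _ = 2 * (1 - η) * ((1 + a) / 2) ^ n := by rw [div_pow]; ring

end

/-- Main theorem: for every `δ > 0` (and every `ε > 0`), in the correlated binary
database model with the `ε`-DP counting-frequency Laplace mechanism, there exists `N`
such that for all `n ≥ N` and all outputs `y ≤ 0`,
`ℓ(D₁ → y) = log (P_{Y|D₁=0}(y) / P_Y(y)) > log(1/α) - δ = ε_max(D₁) - δ`. -/
theorem dp_pml_arbitrarily_weak (ε α η δ : ℝ) (hε : 0 < ε) (hα0 : 0 < α)
    (hα : α < 1 / 2) (hη0 : 0 < η) (hη1 : η < 1) (hδ : 0 < δ) :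
    ∃ N : ℕ, ∀ n ≥ N, ∀ y : ℝ, y ≤ 0 →
      Real.log
        ((∑ d : Fin n → Bool,
            (if d = (fun _ => false) then η else (1 - η) / ((2 : ℝ) ^ n - 1)) *
              ((ε * (n + 1) / 2) * Real.exp (-(ε * (n + 1)) * |y -
                ((Finset.univ.filter (fun j => d j = true)).card : ℝ) / (n + 1)|))) /
          (α * (∑ d : Fin n → Bool,
            (if d = (fun _ => false) then η else (1 - η) / ((2 : ℝ) ^ n - 1)) *
              ((ε * (n + 1) / 2) * Real.exp (-(ε * (n + 1)) * |y -
                ((Finset.univ.filter (fun j => d j = true)).card : ℝ) / (n + 1)|))) +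
            (1 - α) * (∑ d : Fin n → Bool,
              (if d = (fun _ => true) then η else (1 - η) / ((2 : ℝ) ^ n - 1)) *
                ((ε * (n + 1) / 2) * Real.exp (-(ε * (n + 1)) * |y - (1 +
                  ((Finset.univ.filter (fun j => d j = true)).card : ℝ)) / (n + 1)|))))) >
      Real.log (1 / α) - δ := by
  set a := exp (-ε)
  have ha0 : 0 ≤ a := (exp_pos _).le
  have ha1 : a < 1 := exp_lt_one_iff.mpr (neg_lt_zero.mpr hε)
  have hδ' : 0 < exp δ - 1 := sub_pos.mpr (one_lt_exp_iff.mpr hδ)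
  have hgap : 0 < α * η * (exp δ - 1) := by positivity
  have hsmall := (tendsto_condPGF_true hη0.le hη1.le ha0 ha1).const_mul ((1 - α) * a)
  rw [mul_zero] at hsmall
  obtain ⟨N, hN⟩ := eventually_atTop.mp (hsmall.eventually_lt_const hgap)
  refine ⟨N, fun n hn y hy => ?_⟩
  have hm : (0 : ℝ) < n + 1 := by positivity
  rw [sum_mul_laplace_natCast_of_nonpos _ _ hm hy,
    sum_mul_laplace_one_add_natCast_of_nonpos _ _ hm hy]
  set K := ε * (n + 1) / 2 * exp (ε * (n + 1) * y)
  have hK : 0 < K := by positivity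
  have hS₀ : η ≤ condPGF η n false a := le_condPGF_false hη0.le hη1.le ha0
  have hS₁ : 0 ≤ condPGF η n true a := condPGF_nonneg hη0.le hη1.le ha0
  refine log_one_div_sub_lt_log_div_mixture (L₀ := K * condPGF η n false a)
    (L₁ := K * (a * condPGF η n true a)) hα0 (mul_pos hK (hη0.trans_le hS₀))
    (mul_nonneg (by linarith) (by positivity)) ?_
  linarith [mul_lt_mul_of_pos_left (hN n hn) hK,
    mul_le_mul_of_nonneg_left hS₀ (by positivity : 0 ≤ K * (α * (exp δ - 1)))]
end

section
/- Pointwise maximal leakage satisfies the pre-processing inequality: if U − X − Y is a Markov chain on finite sets, then for every y with P_Y(y) > 0, ℓ(U→y) ≤ ℓ(X→y). -/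
open Finset Real

/- The posterior-to-prior ratio of `U` at `u` is the average of those of `X`, weighted by
`P_{X|U=u}`: by the Markov property, `P_{UY}(u, y) / (P_U(u) P_Y(y)) = ∑ₓ P_{X|U=u}(x) k(x, y) / P_Y(y)`.
An average never exceeds the maximum, and `log` is monotone on the positive reals; the left
maximum is positive because `∑ᵤ P_{UY}(u, y) = P_Y(y) > 0`. -/

theorem Finset.sum_mul_le_sum_mul_sup' {ι R : Type*} [Semiring R] [LinearOrder R]
    [IsOrderedRing R] (s : Finset ι) (hs : s.Nonempty) (w f : ι → R)
    (hw : ∀ i ∈ s, 0 ≤ w i) :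
    ∑ i ∈ s, w i * f i ≤ (∑ i ∈ s, w i) * s.sup' hs f := by
  rw [sum_mul]
  exact sum_le_sum fun i hi => mul_le_mul_of_nonneg_left (le_sup' f hi) (hw i hi)

theorem pml_preprocessing_general {U X Y : Type*} [Fintype U] [Nonempty U]
    [Fintype X] [Nonempty X] [Fintype Y]
    (pUX : U → X → ℝ) (hUX : ∀ u x, 0 ≤ pUX u x)
    (k : X → Y → ℝ)
    (pU : U → ℝ) (hpU : ∀ u, pU u = ∑ x, pUX u x) (hpUpos : ∀ u, 0 < pU u)
    (pX : X → ℝ) (hpX : ∀ x, pX x = ∑ u, pUX u x) (hpXpos : ∀ x, 0 < pX x)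
    (pY : Y → ℝ) (hpY : ∀ y, pY y = ∑ x, pX x * k x y)
    (y : Y) (hy : 0 < pY y) :
    Real.log (Finset.univ.sup' Finset.univ_nonempty
      (fun u => ((∑ x, pUX u x * k x y) / pY y) / pU u)) ≤
    Real.log (Finset.univ.sup' Finset.univ_nonempty
      (fun x => ((pX x * k x y) / pY y) / pX x)) := by
  have hratioX : ∀ x, ((pX x * k x y) / pY y) / pX x = k x y / pY y := fun x => by
    field_simp [(hpXpos x).ne']
  simp only [hratioX]
  have hpYU : ∑ u, ∑ x, pUX u x * k x y = pY y := by
    simp only [hpY, hpX, sum_mul]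
    exact sum_comm
  obtain ⟨u₀, -, hu₀⟩ := exists_lt_of_sum_lt (s := univ) (f := fun _ => (0 : ℝ))
    (g := fun u => ∑ x, pUX u x * k x y) (by rwa [hpYU, sum_const_zero])
  have hpos : 0 < ((∑ x, pUX u₀ x * k x y) / pY y) / pU u₀ :=
    div_pos (div_pos hu₀ hy) (hpUpos u₀)
  refine Real.log_le_log ((lt_sup'_iff _).2 ⟨u₀, mem_univ _, hpos⟩) (sup'_le _ _ fun u _ => ?_)
  rw [div_le_iff₀' (hpUpos u), sum_div, hpU u]
  simp only [mul_div_assoc]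
  exact sum_mul_le_sum_mul_sup' _ _ _ _ fun x _ => hUX u x

/-- Pre-processing inequality for PML: if `U − X − Y` is a Markov chain, then
`ℓ(U→y) ≤ ℓ(X→y)` for every `y` with `P_Y(y) > 0`. -/
theorem pml_preprocessing {U X Y : Type*} [Fintype U] [Nonempty U]
    [Fintype X] [Nonempty X] [Fintype Y]
    (pUX : U → X → ℝ) (hUX : ∀ u x, 0 ≤ pUX u x) (hsum : ∑ u, ∑ x, pUX u x = 1)
    (k : X → Y → ℝ) (hk : ∀ x y, 0 ≤ k x y) (hks : ∀ x, ∑ y, k x y = 1)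
    (pU : U → ℝ) (hpU : ∀ u, pU u = ∑ x, pUX u x) (hpUpos : ∀ u, 0 < pU u)
    (pX : X → ℝ) (hpX : ∀ x, pX x = ∑ u, pUX u x) (hpXpos : ∀ x, 0 < pX x)
    (pY : Y → ℝ) (hpY : ∀ y, pY y = ∑ x, pX x * k x y)
    (y : Y) (hy : 0 < pY y) :
    Real.log (Finset.univ.sup' Finset.univ_nonempty
      (fun u => ((∑ x, pUX u x * k x y) / pY y) / pU u)) ≤
    Real.log (Finset.univ.sup' Finset.univ_nonempty
      (fun x => ((pX x * k x y) / pY y) / pX x)) :=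
  pml_preprocessing_general pUX hUX k pU hpU hpUpos pX hpX hpXpos pY hpY y hy
end

section
/- Pointwise maximal leakage satisfies the post-processing inequality: if X − Y − Z is a Markov chain on finite sets, then for every z with P_Z(z) > 0, ℓ(X→z) ≤ max_{y : P(Y=y|Z=z)>0} ℓ(X→y). -/
/-! By the Markov property, the posterior `P_{X|Z=z}` is the mixture of the posteriors
`P_{X|Y=y}` with weights `P(y|z)`, over the `y` with `P(y|z) > 0`. The largest ratio
`max_x p(x) / P_X(x)` is a convex function of `p`, so for the mixture it is at most its largest
value over the components; it is positive, so taking logarithms gives the inequality. -/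

open Finset Real

section MaxRatio

variable {α : Type*} [Fintype α] [Nonempty α]

noncomputable def maxRatio (p q : α → ℝ) : ℝ :=
  univ.sup' univ_nonempty fun a => p a / q a

theorem div_le_maxRatio (p q : α → ℝ) (a : α) : p a / q a ≤ maxRatio p q :=
  le_sup' (fun a => p a / q a) (mem_univ a)

theorem maxRatio_pos {p q : α → ℝ} (hq : ∀ a, 0 < q a) (hp : 0 < ∑ a, p a) :
    0 < maxRatio p q := by
  obtain ⟨a, -, hpa⟩ := exists_lt_of_sum_lt (f := fun _ => (0 : ℝ)) (g := p) (by simpa using hp)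
  exact (div_pos hpa (hq a)).trans_le (div_le_maxRatio p q a)

theorem maxRatio_le_sup'_of_eq_sum {ι : Type*} {s : Finset ι} (hs : s.Nonempty)
    {p q : α → ℝ} {w : ι → ℝ} {r : ι → α → ℝ} (hw : ∀ i ∈ s, 0 ≤ w i)
    (hw₁ : ∑ i ∈ s, w i = 1) (hp : ∀ a, p a = ∑ i ∈ s, w i * r i a) :
    maxRatio p q ≤ s.sup' hs fun i => maxRatio (r i) q := by
  refine sup'_le _ _ fun a _ => ?_
  calc p a / q a = ∑ i ∈ s, w i * (r i a / q a) := by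
        simp only [hp, sum_div, mul_div_assoc]
    _ ≤ ∑ i ∈ s, w i * s.sup' hs (fun i => maxRatio (r i) q) :=
        sum_le_sum fun i hi => mul_le_mul_of_nonneg_left
          ((div_le_maxRatio (r i) q a).trans (le_sup' (fun i => maxRatio (r i) q) hi)) (hw i hi)
    _ = s.sup' hs (fun i => maxRatio (r i) q) := by rw [← sum_mul, hw₁, one_mul]

end MaxRatio

section Mixture

variable {ι : Type*} [Fintype ι] {a b c : ι → ℝ}

theorem sum_filter_pos_mul_eq_sum_mul [DecidablePred fun i => 0 < b i * c i]
    (ha : ∀ i, 0 ≤ a i) (hab : ∀ i, a i ≤ b i) (hc : ∀ i, 0 ≤ c i) :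
    ∑ i ∈ univ.filter (fun i => 0 < b i * c i), a i * c i = ∑ i, a i * c i :=
  sum_filter_of_ne fun i _ hi =>
    (lt_of_le_of_ne (mul_nonneg (ha i) (hc i)) hi.symm).trans_le
      (mul_le_mul_of_nonneg_right (hab i) (hc i))

theorem sum_mul_div_eq_sum_filter [DecidablePred fun i => 0 < b i * c i]
    (ha : ∀ i, 0 ≤ a i) (hab : ∀ i, a i ≤ b i) (hc : ∀ i, 0 ≤ c i) (d : ℝ) :
    (∑ i, a i * c i) / d =
      ∑ i ∈ univ.filter (fun i => 0 < b i * c i), b i * c i / d * (a i / b i) := by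
  rw [← sum_filter_pos_mul_eq_sum_mul ha hab hc, sum_div]
  refine sum_congr rfl fun i hi => ?_
  have hb : b i ≠ 0 := left_ne_zero_of_mul (mem_filter.1 hi).2.ne'
  field_simp

end Mixture

open scoped Classical in
theorem pml_postprocessing_general {X Y Z : Type*} [Fintype X] [Nonempty X]
    [Fintype Y]
    (pXY : X → Y → ℝ) (h1 : ∀ x y, 0 ≤ pXY x y)
    (k : Y → Z → ℝ) (hk : ∀ y z, 0 ≤ k y z)
    (pX : X → ℝ) (hpXpos : ∀ x, 0 < pX x)
    (pY : Y → ℝ) (hpY : ∀ y, pY y = ∑ x, pXY x y)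
    (z : Z) (pZ : ℝ) (hpZ : pZ = ∑ y, pY y * k y z) (hpZpos : 0 < pZ)
    (hne : (Finset.univ.filter (fun y => 0 < pY y * k y z)).Nonempty) :
    Real.log (Finset.univ.sup' Finset.univ_nonempty
      (fun x => ((∑ y, pXY x y * k y z) / pZ) / pX x)) ≤
    (Finset.univ.filter (fun y => 0 < pY y * k y z)).sup' hne
      (fun y => Real.log (Finset.univ.sup' Finset.univ_nonempty
        (fun x => (pXY x y / pY y) / pX x))) := by
  have hpY_nonneg : ∀ y, 0 ≤ pY y := fun y => hpY y ▸ sum_nonneg fun x _ => h1 x y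
  have hpXY_le : ∀ x y, pXY x y ≤ pY y := fun x y =>
    hpY y ▸ single_le_sum (fun x _ => h1 x y) (mem_univ x)
  have hweights : ∑ y ∈ univ.filter (fun y => 0 < pY y * k y z), pY y * k y z / pZ = 1 := by
    rw [← sum_div, sum_filter_pos_mul_eq_sum_mul hpY_nonneg (fun y => le_rfl) (hk · z), ← hpZ,
      div_self hpZpos.ne']
  have hpost_sum : 0 < ∑ x, (∑ y, pXY x y * k y z) / pZ := by
    rw [← sum_div, sum_comm]
    simp_rw [← sum_mul, ← hpY, ← hpZ, div_self hpZpos.ne', zero_lt_one]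
  have hmix := maxRatio_le_sup'_of_eq_sum hne (q := pX)
    (fun y _ => div_nonneg (mul_nonneg (hpY_nonneg y) (hk y z)) hpZpos.le) hweights
    (fun x => sum_mul_div_eq_sum_filter (h1 x) (hpXY_le x) (hk · z) pZ)
  obtain ⟨y, hy, hle⟩ := (le_sup'_iff hne).1 hmix
  calc _ ≤ log (maxRatio (fun x => pXY x y / pY y) pX) :=
        log_le_log (maxRatio_pos hpXpos hpost_sum) hle
    _ ≤ _ := le_sup' (fun y => log (maxRatio (fun x => pXY x y / pY y) pX)) hy

open scoped Classical in
/-- Post-processing inequality for PML: if `X − Y − Z` is a Markov chain, then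
`ℓ(X→z) ≤ max_{y : P(Y=y|Z=z)>0} ℓ(X→y)`. -/
theorem pml_postprocessing {X Y Z : Type*} [Fintype X] [Nonempty X]
    [Fintype Y] [Fintype Z]
    (pXY : X → Y → ℝ) (h1 : ∀ x y, 0 ≤ pXY x y) (hs : ∑ x, ∑ y, pXY x y = 1)
    (k : Y → Z → ℝ) (hk : ∀ y z, 0 ≤ k y z) (hks : ∀ y, ∑ z, k y z = 1)
    (pX : X → ℝ) (hpX : ∀ x, pX x = ∑ y, pXY x y) (hpXpos : ∀ x, 0 < pX x)
    (pY : Y → ℝ) (hpY : ∀ y, pY y = ∑ x, pXY x y)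
    (z : Z) (pZ : ℝ) (hpZ : pZ = ∑ y, pY y * k y z) (hpZpos : 0 < pZ)
    (hne : (Finset.univ.filter (fun y => 0 < pY y * k y z)).Nonempty) :
    Real.log (Finset.univ.sup' Finset.univ_nonempty
      (fun x => ((∑ y, pXY x y * k y z) / pZ) / pX x)) ≤
    (Finset.univ.filter (fun y => 0 < pY y * k y z)).sup' hne
      (fun y => Real.log (Finset.univ.sup' Finset.univ_nonempty
        (fun x => (pXY x y / pY y) / pX x))) :=
  pml_postprocessing_general pXY h1 k hk pX hpXpos pY hpY z pZ hpZ hpZpos hne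
end
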